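/- Let k ≥ 3 and let B be a nonempty finite word over ℕ that is a factor of some W_N^{(k)}. Assume that for every n ≥ k, every occurrence of k ⊕ B in W_n^{(k)} is entirely contained in a single block of the decomposition W_n^{(k)} = W_{n−1}^{(k)} W_{n−2}^{(k)} ⋯ W_{n−k+1}^{(k)} (k ⊕ W_{n−k}^{(k)}) (i.e., no occurrence crosses a boundary between consecutive blocks). Then the generating functions satisfy C_{k⊕B}^{(k)}(y) = y^k · H_{k−1}(y) · C_B^{(k)}(y) as formal power series over ℚ. -/

import Mathlib

/-- Image of a single letter `m = k*i + j` under the k-Bonacci morphism `φ_k` over ℕ: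
`φ_k(ki+j) = (ki)(ki+j+1)` for `0 ≤ j ≤ k-2`, and `φ_k(ki+(k-1)) = ki+k`. -/
def phiLetter (k m : ℕ) : List ℕ :=
  if m % k = k - 1 then [m + 1] else [k * (m / k), m + 1]

/-- The morphism `φ_k`, extended to words by concatenation. -/
def phi (k : ℕ) (w : List ℕ) : List ℕ := (w.map (phiLetter k)).flatten

/-- `W k n = φ_k^n(0)`, the n-th iterate of `φ_k` applied to the one-letter word `0`. -/
def W (k n : ℕ) : List ℕ := (phi k)^[n] [0]

/-- `shift n w = n ⊕ w`, adding `n` to every letter. -/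
def shift (n : ℕ) (w : List ℕ) : List ℕ := w.map (· + n)

/-- `occ B w = |w|_B`, the number of (possibly overlapping) occurrences of `B`
as a factor of `w`, i.e. the number of positions `i` at which `B` is a prefix
of the suffix of `w` starting at `i`. -/
def occ (B w : List ℕ) : ℕ :=
  ((List.range (w.length + 1)).filter (fun i => decide (B <+: w.drop i))).length

/-- `C k B = C_B^{(k)}(y) = Σ_{n≥0} |W_n^{(k)}|_B yⁿ` as a formal power series over ℚ. -/
noncomputable def C (k : ℕ) (B : List ℕ) : PowerSeries ℚ :=
  PowerSeries.mk (fun n => (occ B (W k n) : ℚ))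

/-- `Hgf r = H_r(y)`, the multiplicative inverse of `1 - y - y² - ⋯ - y^r`. -/
noncomputable def Hgf (r : ℕ) : PowerSeries ℚ :=
  (1 - ∑ j ∈ Finset.Icc 1 r, (PowerSeries.X : PowerSeries ℚ) ^ j)⁻¹

/-- `Ggf r = G_r(y) = (1 - y^r)·H_r(y) - 1`. -/
noncomputable def Ggf (r : ℕ) : PowerSeries ℚ :=
  (1 - (PowerSeries.X : PowerSeries ℚ) ^ r) * Hgf r - 1

/-- The set `B^{(k)} = B_1^{(k)} ∪ B_2^{(k)} ∪ B_3^{(k)}` of length-2 words. -/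
def Bset (k : ℕ) : Set (List ℕ) :=
  {U | (∃ i a : ℕ, 1 ≤ a ∧ U = [a + k * i, k + k * i]) ∨
       (∃ i b : ℕ, 1 ≤ b ∧ b ≤ k - 1 ∧ U = [k * i, b + k * i]) ∨
       (∃ a : ℕ, 1 ≤ a ∧ U = [a, 0])}

/-- The list of blocks in the decomposition of `W_n^{(k)}` for `n ≥ k`:
`W_{n-1}, …, W_{n-k+1}, k ⊕ W_{n-k}`. -/
def blocks (k n : ℕ) : List (List ℕ) :=
  (List.range (k - 1)).map (fun j => W k (n - 1 - j)) ++ [shift k (W k (n - k))]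

lemma phi_append (k : ℕ) (u v : List ℕ) : phi k (u ++ v) = phi k u ++ phi k v := by
  simp [phi]
lemma W_succ (k n : ℕ) : W k (n + 1) = phi k (W k n) := by
  simp [W, Function.iterate_succ_apply']
lemma phiLetter_shift (k : ℕ) (hk : 0 < k) (m : ℕ) :
    phiLetter k (m + k) = (phiLetter k m).map (· + k) := by
  unfold phiLetter
  rw [Nat.add_mod_right, Nat.add_div_right _ hk]
  by_cases h : m % k = k - 1 <;> simp [h, Nat.mul_add, Nat.add_comm] <;> omega
lemma phi_shift (k : ℕ) (hk : 0 < k) (w : List ℕ) :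
    phi k (shift k w) = shift k (phi k w) := by
  induction w with
  | nil => simp [phi, shift]
  | cons a t ih =>
    have : shift k (a :: t) = (a + k) :: shift k t := rfl
    simp only [phi, shift, List.map_cons, List.flatten_cons] at *
    rw [phiLetter_shift k hk a, List.map_append, ih]
lemma phi_flatten (k : ℕ) (L : List (List ℕ)) :
    phi k L.flatten = (L.map (phi k)).flatten := by
  induction L with
  | nil => rfl
  | cons a t ih => simp [phi_append, ih]
lemma W_eq_base (k : ℕ) (hk : 2 ≤ k) (n : ℕ) (hn : n ≤ k - 1) :
    W k n = ((List.range n).map (fun j => W k (n - 1 - j))).flatten ++ [n] := by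
  induction n with
  | zero => simp [W]
  | succ n ih =>
    have hn' : n ≤ k - 1 := by omega
    rw [W_succ, ih hn', phi_append, phi_flatten]
    have hphin : phi k [n] = [0, n + 1] := by
      have h1 : n % k = n := Nat.mod_eq_of_lt (by omega)
      have h2 : n / k = 0 := Nat.div_eq_of_lt (by omega)
      have h3 : ¬ (n = k - 1) := by omega
      simp [phi, phiLetter, h1, h2, h3]
    rw [hphin, List.range_succ]
    simp only [List.map_append, List.map_map, List.flatten_append, List.map_cons,
      List.map_nil, List.flatten_cons, List.flatten_nil]
    have hc : (List.range n).map (phi k ∘ fun j => W k (n - 1 - j)) =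
        (List.range n).map (fun j => W k (n + 1 - 1 - j)) := by
      apply List.map_congr_left
      intro j hj
      have hj' : j < n := List.mem_range.mp hj
      have : n - 1 - j + 1 = n + 1 - 1 - j := by omega
      simp only [Function.comp_apply, ← W_succ, this]
    rw [hc]
    have h0 : W k (n + 1 - 1 - n) = [0] := by
      have : n + 1 - 1 - n = 0 := by omega
      rw [this]; rfl
    simp [h0, W]
lemma W_decomp_base (k : ℕ) (hk : 3 ≤ k) :
    W k k = ((List.range (k - 1)).map (fun j => W k (k - 1 - j))).flatten ++
      shift k (W k 0) := by
  have key : W k ((k-1)+1) = phi k (W k (k-1)) := W_succ k (k-1)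
  rw [show (k-1)+1 = k by omega] at key
  rw [key, W_eq_base k (by omega) (k-1) le_rfl, phi_append, phi_flatten]
  have hphin : phi k [k - 1] = [k] := by
    have h1 : (k - 1) % k = k - 1 := Nat.mod_eq_of_lt (by omega)
    have : k - 1 + 1 = k := by omega
    simp [phi, phiLetter, h1, this]
  rw [hphin, List.map_map]
  have hc : (List.range (k-1)).map (phi k ∘ fun j => W k (k - 1 - 1 - j)) =
      (List.range (k-1)).map (fun j => W k (k - 1 - j)) := by
    apply List.map_congr_left
    intro j hj
    have hj' : j < k - 1 := List.mem_range.mp hj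
    have : k - 1 - 1 - j + 1 = k - 1 - j := by
      omega
    simp only [Function.comp_apply, ← W_succ, this]
  rw [hc]
  have h3 : shift k (W k 0) = [k] := by simp [W, shift]
  rw [h3]
lemma W_decomp (k : ℕ) (hk : 3 ≤ k) (n : ℕ) (hn : k ≤ n) :
    W k n = ((List.range (k - 1)).map (fun j => W k (n - 1 - j))).flatten ++
      shift k (W k (n - k)) := by
  induction n with
  | zero => omega
  | succ n ih =>
    rcases Nat.lt_or_ge n k with h | h
    · -- base case : n + 1 = k
      have hnk : n + 1 = k := by omega
      rw [hnk, show k - k = 0 by omega]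
      exact W_decomp_base k hk
    · -- inductive step
      rw [W_succ, ih h, phi_append, phi_flatten, phi_shift k (by omega), ← W_succ,
        List.map_map]
      have hc : (List.range (k-1)).map (phi k ∘ fun j => W k (n - 1 - j)) =
          (List.range (k-1)).map (fun j => W k (n + 1 - 1 - j)) := by
        apply List.map_congr_left
        intro j hj
        have hj' : j < k - 1 := List.mem_range.mp hj
        have : n - 1 - j + 1 = n + 1 - 1 - j := by omega
        simp only [Function.comp_apply, ← W_succ, this]
      rw [hc]
      have : n - k + 1 = n + 1 - k := by omega
      rw [this]
lemma flatten_blocks (k n : ℕ) (hk : 3 ≤ k) (hn : k ≤ n) :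
    (blocks k n).flatten = W k n := by
  rw [W_decomp k hk n hn, blocks, List.flatten_append]
  simp
lemma mem_W_le (k : ℕ) (hk : 1 ≤ k) (n m : ℕ) (hm : m ∈ W k n) : m ≤ n := by
  induction n generalizing m with
  | zero => simp [W] at hm; omega
  | succ n ih =>
    rw [W_succ] at hm
    simp only [phi, List.mem_flatten, List.mem_map] at hm
    obtain ⟨l, ⟨a, ha, rfl⟩, hml⟩ := hm
    have ha' : a ≤ n := ih a ha
    unfold phiLetter at hml
    by_cases h : a % k = k - 1 <;> simp [h] at hml
    · omega
    · rcases hml with h1 | h1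
      · have : k * (a / k) ≤ a := Nat.mul_div_le a k
        omega
      · omega
lemma occ_eq_card (B w : List ℕ) :
    occ B w = ((Finset.range (w.length + 1)).filter (fun i => B <+: w.drop i)).card := by
  rfl
lemma prefix_map_iff {f : ℕ → ℕ} (hf : Function.Injective f) (a b : List ℕ) :
    a.map f <+: b.map f ↔ a <+: b := by
  constructor
  · intro h
    rw [List.prefix_iff_eq_take] at h ⊢
    rw [List.length_map, ← List.map_take] at h
    exact (List.map_injective_iff.mpr hf) h
  · intro h
    exact h.map _
lemma occ_shift (k : ℕ) (B w : List ℕ) : occ (shift k B) (shift k w) = occ B w := by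
  unfold occ shift
  rw [List.length_map]
  congr 1
  apply List.filter_congr
  intro i _
  simp only [decide_eq_decide]
  rw [← List.map_drop]
  exact prefix_map_iff (fun a b => by omega) B (w.drop i)
lemma prefix_drop_of_le (P u v : List ℕ) (i : ℕ) (h : P <+: (u ++ v).drop i)
    (hle : i + P.length ≤ u.length) : P <+: u.drop i := by
  rw [List.prefix_iff_eq_take] at h ⊢
  rw [List.drop_append, List.take_append_of_le_length] at h
  · exact h
  · rw [List.length_drop]; omega
lemma prefix_drop_left (P u v : List ℕ) (i : ℕ) (h : P <+: u.drop i) :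
    P <+: (u ++ v).drop i := by
  rcases le_or_gt i u.length with hle | hlt
  · rw [List.drop_append_of_le_length hle]
    exact h.trans ((u.drop i).prefix_append v)
  · rw [List.drop_eq_nil_of_le (by omega)] at h
    rw [List.prefix_nil] at h
    subst h
    exact List.nil_prefix
lemma lt_length_of_prefix_drop (P u : List ℕ) (hP : P ≠ []) (i : ℕ)
    (h : P <+: u.drop i) : i < u.length := by
  by_contra hc
  rw [List.drop_eq_nil_of_le (by omega), List.prefix_nil] at h
  exact hP h
lemma drop_append_ge (u v : List ℕ) (i : ℕ) (h : u.length ≤ i) :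
    (u ++ v).drop i = v.drop (i - u.length) := by
  rw [List.drop_append, List.drop_eq_nil_of_le h, List.nil_append]
lemma occ_append (P u v : List ℕ) (hP : P ≠ [])
    (hcross : ∀ i, P <+: (u ++ v).drop i → i + P.length ≤ u.length ∨ u.length ≤ i) :
    occ P (u ++ v) = occ P u + occ P v := by
  rw [occ_eq_card, occ_eq_card, occ_eq_card, List.length_append]
  set A := (Finset.range (u.length + 1)).filter (fun i => P <+: u.drop i) with hA
  set B := ((Finset.range (v.length + 1)).filter (fun j => P <+: v.drop j)).image
    (· + u.length) with hB
  have hunion : (Finset.range (u.length + v.length + 1)).filter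
      (fun i => P <+: (u ++ v).drop i) = A ∪ B := by
    ext i
    simp only [hA, hB, Finset.mem_filter, Finset.mem_range, Finset.mem_union,
      Finset.mem_image]
    constructor
    · rintro ⟨hir, hpre⟩
      rcases hcross i hpre with hc | hc
      · exact Or.inl ⟨by omega, prefix_drop_of_le P u v i hpre hc⟩
      · refine Or.inr ⟨i - u.length, ⟨by omega, ?_⟩, by omega⟩
        rw [drop_append_ge u v i hc] at hpre
        exact hpre
    · rintro (⟨hir, hpre⟩ | ⟨j, ⟨hjr, hpre⟩, rfl⟩)
      · have := lt_length_of_prefix_drop P u hP i hpre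
        exact ⟨by omega, prefix_drop_left P u v i hpre⟩
      · refine ⟨by omega, ?_⟩
        rw [drop_append_ge u v (j + u.length) (by omega)]
        simpa using hpre
  have hdisj : Disjoint A B := by
    rw [Finset.disjoint_left]
    rintro i hiA hiB
    have h1 : i < u.length := by
      simp only [hA, Finset.mem_filter] at hiA
      exact lt_length_of_prefix_drop P u hP i hiA.2
    simp only [hB, Finset.mem_image, Finset.mem_filter] at hiB
    obtain ⟨j, _, rfl⟩ := hiB
    omega
  rw [hunion, Finset.card_union_of_disjoint hdisj, hB,
    Finset.card_image_of_injective _ (add_left_injective u.length)]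
lemma occ_nil (P : List ℕ) (hP : P ≠ []) : occ P [] = 0 := by
  simp [occ, hP]
lemma occ_flatten (P : List ℕ) (hP : P ≠ []) :
    ∀ (L : List (List ℕ)),
    (∀ i, P <+: L.flatten.drop i →
      ∃ m, ((L.take m).flatten).length ≤ i ∧
        i + P.length ≤ ((L.take (m + 1)).flatten).length) →
    occ P L.flatten = (L.map (occ P)).sum := by
  intro L
  induction L with
  | nil => intro _; simpa using occ_nil P hP
  | cons b L' ih =>
    intro h
    have hflat : (b :: L').flatten = b ++ L'.flatten := rfl
    have hcross : ∀ i, P <+: (b ++ L'.flatten).drop i →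
        i + P.length ≤ b.length ∨ b.length ≤ i := by
      intro i hpre
      obtain ⟨m, h1, h2⟩ := h i (by rwa [hflat])
      match m with
      | 0 =>
        left
        simpa using h2
      | m' + 1 =>
        right
        have : b.length ≤ ((b :: L').take (m' + 1)).flatten.length := by
          simp [List.take_cons, List.flatten_cons]
        omega
    have hL' : ∀ j, P <+: L'.flatten.drop j →
        ∃ m, ((L'.take m).flatten).length ≤ j ∧
          j + P.length ≤ ((L'.take (m + 1)).flatten).length := by
      intro j hpre
      have hj : P <+: (b :: L').flatten.drop (b.length + j) := by
        rw [hflat, List.drop_length_add_append]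
        exact hpre
      obtain ⟨m, h1, h2⟩ := h (b.length + j) hj
      have hPlen : 0 < P.length := List.length_pos_iff.mpr hP
      match m with
      | 0 =>
        exfalso
        have : ((b :: L').take (0 + 1)).flatten.length = b.length := by
          simp
        omega
      | m' + 1 =>
        refine ⟨m', ?_, ?_⟩
        · have h3 : ((b :: L').take (m' + 1)).flatten.length =
              b.length + (L'.take m').flatten.length := by
            simp [List.take_cons, List.flatten_cons]
          omega
        · have h3 : ((b :: L').take (m' + 1 + 1)).flatten.length =
              b.length + (L'.take (m' + 1)).flatten.length := by
            simp [List.take_cons, List.flatten_cons]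
          omega
    rw [hflat, occ_append P b L'.flatten hP hcross, List.map_cons, List.sum_cons,
      ih hL']
lemma occ_shift_small (k : ℕ) (hk : 1 ≤ k) (B : List ℕ) (hB : B ≠ []) (n : ℕ)
    (hn : n < k) : occ (shift k B) (W k n) = 0 := by
  rw [occ]
  rw [List.length_eq_zero_iff]
  rw [List.filter_eq_nil_iff]
  intro i _
  simp only [decide_eq_true_eq]
  intro hpre
  obtain ⟨b, t, rfl⟩ : ∃ b t, B = b :: t := by
    cases B with
    | nil => exact absurd rfl hB
    | cons b t => exact ⟨b, t, rfl⟩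
  have hmem : b + k ∈ (W k n).drop i := by
    have : b + k ∈ shift k (b :: t) := by simp [shift]
    exact hpre.sublist.subset this
  have : b + k ∈ W k n := (List.drop_sublist i (W k n)).subset hmem
  have := mem_W_le k hk n (b + k) this
  omega
lemma list_sum_range (f : ℕ → ℕ) (n : ℕ) :
    ((List.range n).map f).sum = ∑ j ∈ Finset.range n, f j := by
  induction n with
  | zero => simp
  | succ n ih => rw [List.range_succ, Finset.sum_range_succ]; simp [ih]
lemma occ_rec (k : ℕ) (hk : 3 ≤ k) (B : List ℕ) (hB : B ≠ [])
    (hincl : ∀ n, k ≤ n → ∀ i : ℕ, shift k B <+: (W k n).drop i →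
      ∃ m : ℕ, ((blocks k n).take m).flatten.length ≤ i ∧
        i + B.length ≤ ((blocks k n).take (m + 1)).flatten.length)
    (n : ℕ) (hn : k ≤ n) :
    occ (shift k B) (W k n) =
      (∑ j ∈ Finset.range (k - 1), occ (shift k B) (W k (n - 1 - j))) +
        occ B (W k (n - k)) := by
  have hP : shift k B ≠ [] := by
    cases B with
    | nil => exact absurd rfl hB
    | cons b t => simp [shift]
  have hlen : (shift k B).length = B.length := List.length_map _
  have hcond : ∀ i, shift k B <+: (blocks k n).flatten.drop i →
      ∃ m, (((blocks k n).take m).flatten).length ≤ i ∧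
        i + (shift k B).length ≤ (((blocks k n).take (m + 1)).flatten).length := by
    rw [flatten_blocks k n hk hn, hlen]
    exact hincl n hn
  have := occ_flatten (shift k B) hP (blocks k n) hcond
  rw [flatten_blocks k n hk hn] at this
  rw [this, blocks, List.map_append, List.sum_append, List.map_map]
  simp only [List.map_cons, List.map_nil, List.sum_cons, List.sum_nil, add_zero]
  rw [occ_shift k B (W k (n - k))]
  rw [← list_sum_range]
  rfl

theorem stmt3 (k : ℕ) (hk : 3 ≤ k) (B : List ℕ) (hB : B ≠ [])
    (hfac : ∃ N, B <:+: W k N)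
    (hincl : ∀ n, k ≤ n → ∀ i : ℕ, shift k B <+: (W k n).drop i →
      ∃ m : ℕ, ((blocks k n).take m).flatten.length ≤ i ∧
        i + B.length ≤ ((blocks k n).take (m + 1)).flatten.length) :
    C k (shift k B) = PowerSeries.X ^ k * Hgf (k - 1) * C k B := by
  set S : PowerSeries ℚ := ∑ j ∈ Finset.Icc 1 (k - 1), (PowerSeries.X : PowerSeries ℚ) ^ j
    with hSdef
  have hconstS : PowerSeries.constantCoeff S = 0 := by
    rw [hSdef, map_sum]
    apply Finset.sum_eq_zero
    intro j hj
    have hj1 : 1 ≤ j := (Finset.mem_Icc.mp hj).1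
    rw [← PowerSeries.coeff_zero_eq_constantCoeff, PowerSeries.coeff_X_pow]
    rw [if_neg (by omega)]
  have hconst : PowerSeries.constantCoeff (1 - S) ≠ 0 := by
    rw [map_sub, map_one, hconstS, sub_zero]
    exact one_ne_zero
  have key : (1 - S) * C k (shift k B) = PowerSeries.X ^ k * C k B := by
    ext n
    rw [sub_mul, one_mul, map_sub, hSdef, Finset.sum_mul, map_sum]
    simp only [PowerSeries.coeff_X_pow_mul', C, PowerSeries.coeff_mk]
    rcases lt_or_ge n k with h | h
    · rw [if_neg (by omega)]
      rw [occ_shift_small k (by omega) B hB n h]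
      rw [Finset.sum_eq_zero (fun j hj => ?_)]
      · simp
      · have hj1 : 1 ≤ j := (Finset.mem_Icc.mp hj).1
        split_ifs with hle
        · rw [occ_shift_small k (by omega) B hB (n - j) (by omega)]
          norm_num
        · rfl
    · rw [if_pos (by omega)]
      have hrec := occ_rec k hk B hB hincl n h
      have hsum : (∑ j ∈ Finset.Icc 1 (k - 1),
          if j ≤ n then ((occ (shift k B) (W k (n - j)) : ℚ)) else 0) =
          ∑ j ∈ Finset.range (k - 1), (occ (shift k B) (W k (n - 1 - j)) : ℚ) := by
        rw [show Finset.Icc 1 (k - 1) = Finset.Ico 1 k by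
          rw [← Finset.Ico_add_one_right_eq_Icc]; congr 1; omega]
        rw [Finset.sum_Ico_eq_sum_range]
        apply Finset.sum_congr (by congr 1)
        intro j hj
        have hj' : j < k - 1 := Finset.mem_range.mp hj
        rw [if_pos (show 1 + j ≤ n by omega)]
        have : n - (1 + j) = n - 1 - j := by omega
        rw [this]
      rw [hsum]
      have hcast := congrArg (fun m : ℕ => (m : ℚ)) hrec
      push_cast at hcast
      rw [hcast]
      ring
  have hH : Hgf (k - 1) * (1 - S) = 1 := by
    rw [Hgf, ← hSdef]
    exact PowerSeries.inv_mul_cancel _ hconst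
  calc C k (shift k B) = (Hgf (k - 1) * (1 - S)) * C k (shift k B) := by rw [hH, one_mul]
    _ = Hgf (k - 1) * ((1 - S) * C k (shift k B)) := by ring
    _ = Hgf (k - 1) * (PowerSeries.X ^ k * C k B) := by rw [key]
    _ = PowerSeries.X ^ k * Hgf (k - 1) * C k B := by ring
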